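/- arXiv:1602.01182 — 2 statements merged into one kernel-verified Lean document; each statement's English description precedes it below -/
import Mathlib

section
/- With the setup of the HDRDA classifier, the shrunken covariance estimator Σ̃_k = α_k Σ̂_k(λ) + γ I_p satisfies Σ̃_k = U (W_k ⊕ γ I_{p−q}) Uᵀ, where W_k = α_k{(1−λ) U₁ᵀ Σ̂_k U₁ + λ D_q} + γ I_q. -/
open Matrix Finset

/-!
Conjugating by the orthogonal matrix `U = (U₁, U₂)` reduces the claim to
`Uᵀ Σ̂_k U = U₁ᵀ Σ̂_k U₁ ⊕ 0`, i.e. to `Σ̂_k U₂ = 0`. Since `U₂ᵀ Σ̂ U₂ = 0` and `Σ̂` is a positive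
combination of the positive semidefinite `Σ̂_k`, every `U₂ᵀ Σ̂_k U₂` is a positive semidefinite
summand of a vanishing sum, hence zero; and a positive semidefinite matrix annihilates every vector
on which its quadratic form vanishes.
-/

namespace Matrix

section PosSemidef

open scoped ComplexOrder MatrixOrder

variable {m n ι 𝕜 : Type*} [RCLike 𝕜]

theorem conjTranspose_mul_mul_apply_self [Fintype n] (A : Matrix n n 𝕜) (B : Matrix n m 𝕜)
    (j : m) : (Bᴴ * A * B) j j = star (B.col j) ⬝ᵥ A *ᵥ B.col j := by
  rw [Matrix.mul_assoc, mul_apply]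
  rfl

theorem PosSemidef.mul_eq_zero_of_conjTranspose_mul_mul_eq_zero [Fintype n] {A : Matrix n n 𝕜}
    (hA : A.PosSemidef) {B : Matrix n m 𝕜} (h : Bᴴ * A * B = 0) : A * B = 0 := by
  ext i j
  have hquad : star (B.col j) ⬝ᵥ A *ᵥ B.col j = 0 := by
    rw [← conjTranspose_mul_mul_apply_self, h, zero_apply]
  exact congrFun ((hA.dotProduct_mulVec_zero_iff _).mp hquad) i

theorem PosSemidef.eq_zero_of_sum_smul_eq_zero [Fintype ι] {A : ι → Matrix n n 𝕜}
    (hA : ∀ i, (A i).PosSemidef) {c : ι → ℝ} (hc : ∀ i, 0 < c i)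
    (h : ∑ i, c i • A i = 0) (i : ι) : A i = 0 := by
  have hnonneg : ∀ j ∈ univ, 0 ≤ c j • A j := fun j _ => ((hA j).smul (hc j).le).nonneg
  have := (Finset.sum_eq_zero_iff_of_nonneg hnonneg).mp h i (mem_univ i)
  exact (smul_eq_zero.mp this).resolve_left (hc i).ne'

theorem PosSemidef.mul_eq_zero_of_conjTranspose_mul_sum_smul_mul_eq_zero [Fintype n] [Finite m]
    [Fintype ι] {A : ι → Matrix n n 𝕜} (hA : ∀ i, (A i).PosSemidef) {c : ι → ℝ} (hc : ∀ i, 0 < c i)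
    {B : Matrix n m 𝕜} (h : Bᴴ * (∑ i, c i • A i) * B = 0) (i : ι) : A i * B = 0 := by
  refine (hA i).mul_eq_zero_of_conjTranspose_mul_mul_eq_zero ?_
  refine eq_zero_of_sum_smul_eq_zero (fun j => (hA j).conjTranspose_mul_mul_same B) hc ?_ i
  simpa only [Matrix.mul_sum, Matrix.sum_mul, Matrix.mul_smul, Matrix.smul_mul] using h

end PosSemidef

section Blocks

variable {p q r R : Type*} [Fintype p] [CommRing R]

theorem transpose_mul_mul_eq_fromBlocks (U : Matrix p (q ⊕ r) R) (S : Matrix p p R) :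
    Uᵀ * S * U = fromBlocks (U.toCols₁ᵀ * S * U.toCols₁) (U.toCols₁ᵀ * S * U.toCols₂)
      (U.toCols₂ᵀ * S * U.toCols₁) (U.toCols₂ᵀ * S * U.toCols₂) := by
  conv_lhs => rw [← fromCols_toCols U]
  rw [transpose_fromCols, fromRows_mul, fromRows_mul_fromCols]

theorem transpose_mul_mul_eq_fromBlocks_of_mul_toCols₂_eq_zero {S : Matrix p p R} (hS : S.IsSymm)
    (U : Matrix p (q ⊕ r) R) (h : S * U.toCols₂ = 0) :
    Uᵀ * S * U = fromBlocks (U.toCols₁ᵀ * S * U.toCols₁) 0 0 0 := by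
  have h' : U.toCols₂ᵀ * S = 0 := by rw [← hS.eq, ← transpose_mul, h, transpose_zero]
  rw [transpose_mul_mul_eq_fromBlocks, Matrix.mul_assoc U.toCols₁ᵀ S U.toCols₂, h, h',
    Matrix.mul_zero, Matrix.zero_mul, Matrix.zero_mul]

theorem transpose_mul_mul_eq_iff_eq_mul_mul_transpose {m n : Type*} [Fintype m] [DecidableEq m]
    [Fintype n] [DecidableEq n] {U : Matrix m n R} (hUl : U * Uᵀ = 1) (hUr : Uᵀ * U = 1)
    {A : Matrix m m R} {B : Matrix n n R} : Uᵀ * A * U = B ↔ A = U * B * Uᵀ := by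
  constructor <;> rintro rfl <;> simp only [Matrix.mul_assoc]
  · rw [hUl, Matrix.mul_one, ← Matrix.mul_assoc, hUl, Matrix.one_mul]
  · rw [hUr, Matrix.mul_one, ← Matrix.mul_assoc, hUr, Matrix.one_mul]

end Blocks

end Matrix

theorem hdrda_shrunken_block_form_general
    {p q r K : ℕ}
    (Sk : Fin K → Matrix (Fin p) (Fin p) ℝ)
    (hSk : ∀ k, (Sk k).PosSemidef)
    (n : Fin K → ℝ) (hn : ∀ k, 0 < n k)
    (N : ℝ) (hN : N = ∑ k, n k)
    (Sbar : Matrix (Fin p) (Fin p) ℝ)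
    (hSbar : Sbar = N⁻¹ • ∑ k, n k • Sk k)
    (U : Matrix (Fin p) (Fin q ⊕ Fin r) ℝ)
    (hUl : U * Uᵀ = 1) (hUr : Uᵀ * U = 1)
    (Dq : Matrix (Fin q) (Fin q) ℝ)
    (hdecomp : Sbar = U * Matrix.fromBlocks Dq 0 0 (0 : Matrix (Fin r) (Fin r) ℝ) * Uᵀ)
    (lam : ℝ)
    (α : Fin K → ℝ)
    (γ : ℝ)
    (U₁ : Matrix (Fin p) (Fin q) ℝ) (hU₁ : U₁ = U.submatrix id Sum.inl)
    (Stil Wk : Fin K → _)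
    (hStil : ∀ k, Stil k = α k • ((1 - lam) • Sk k + lam • Sbar) + γ • (1 : Matrix (Fin p) (Fin p) ℝ))
    (hWk : ∀ k, Wk k = α k • ((1 - lam) • (U₁ᵀ * Sk k * U₁) + lam • Dq) + γ • (1 : Matrix (Fin q) (Fin q) ℝ)) :
    ∀ k, Stil k = U * Matrix.fromBlocks (Wk k) 0 0 (γ • (1 : Matrix (Fin r) (Fin r) ℝ)) * Uᵀ := by
  intro k
  have hN0 : N ≠ 0 := hN ▸ (sum_pos (fun j _ => hn j) ⟨k, mem_univ k⟩).ne'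
  have hSbarU : Uᵀ * Sbar * U = fromBlocks Dq 0 0 0 := by
    rw [transpose_mul_mul_eq_iff_eq_mul_mul_transpose hUl hUr, hdecomp]
  have hSU₂ : ∀ j, Sk j * U.toCols₂ = 0 := by
    refine PosSemidef.mul_eq_zero_of_conjTranspose_mul_sum_smul_mul_eq_zero hSk hn ?_
    have hU₂SbarU₂ := hSbarU
    rw [transpose_mul_mul_eq_fromBlocks, fromBlocks_inj] at hU₂SbarU₂
    rw [conjTranspose_eq_transpose_of_trivial]
    simpa [hSbar, hN0] using hU₂SbarU₂.2.2.2
  have hSkU : Uᵀ * Sk k * U = fromBlocks (U₁ᵀ * Sk k * U₁) 0 0 0 :=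
    hU₁ ▸ transpose_mul_mul_eq_fromBlocks_of_mul_toCols₂_eq_zero
      (isHermitian_iff_isSymm.mp (hSk k).isHermitian) U (hSU₂ k)
  rw [← transpose_mul_mul_eq_iff_eq_mul_mul_transpose hUl hUr]
  simp only [hStil, hWk, Matrix.mul_add, Matrix.add_mul, Matrix.mul_smul, Matrix.smul_mul,
    Matrix.mul_one, hUr, hSkU, hSbarU, ← fromBlocks_one, fromBlocks_smul, fromBlocks_add,
    smul_zero, add_zero, zero_add]

theorem hdrda_shrunken_block_form
    {p q r K : ℕ} (hqr : q + r = p)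
    (Sk : Fin K → Matrix (Fin p) (Fin p) ℝ)
    (hSk : ∀ k, (Sk k).PosSemidef)
    (n : Fin K → ℝ) (hn : ∀ k, 0 < n k)
    (N : ℝ) (hN : N = ∑ k, n k)
    (Sbar : Matrix (Fin p) (Fin p) ℝ)
    (hSbar : Sbar = N⁻¹ • ∑ k, n k • Sk k)
    (U : Matrix (Fin p) (Fin q ⊕ Fin r) ℝ)
    (hUl : U * Uᵀ = 1) (hUr : Uᵀ * U = 1)
    (Dq : Matrix (Fin q) (Fin q) ℝ)
    (d : Fin q → ℝ) (hd : ∀ i, 0 < d i) (hDq : Dq = Matrix.diagonal d)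
    (hdecomp : Sbar = U * Matrix.fromBlocks Dq 0 0 (0 : Matrix (Fin r) (Fin r) ℝ) * Uᵀ)
    (lam : ℝ) (hlam : lam ∈ Set.Icc (0 : ℝ) 1)
    (α : Fin K → ℝ) (hα : ∀ k, 0 ≤ α k)
    (γ : ℝ) (hγ : 0 ≤ γ)
    (U₁ : Matrix (Fin p) (Fin q) ℝ) (hU₁ : U₁ = U.submatrix id Sum.inl)
    (Stil Wk : Fin K → _)
    (hStil : ∀ k, Stil k = α k • ((1 - lam) • Sk k + lam • Sbar) + γ • (1 : Matrix (Fin p) (Fin p) ℝ))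
    (hWk : ∀ k, Wk k = α k • ((1 - lam) • (U₁ᵀ * Sk k * U₁) + lam • Dq) + γ • (1 : Matrix (Fin q) (Fin q) ℝ)) :
    ∀ k, Stil k = U * Matrix.fromBlocks (Wk k) 0 0 (γ • (1 : Matrix (Fin r) (Fin r) ℝ)) * Uᵀ :=
  hdrda_shrunken_block_form_general Sk hSk n hn N hN Sbar hSbar U hUl hUr Dq hdecomp lam α γ U₁ hU₁
    Stil Wk hStil hWk
end

section
/- With Σ̃_k = U(W_k ⊕ γ I_{p−q})Uᵀ as in the HDRDA setup (γ > 0, each W_k positive definite), for every test point x and every class k, the discriminant score (x − x̄_k)ᵀ Σ̃_k⁻¹ (x − x̄_k) + log det(Σ̃_k) equals (x − x̄_k)ᵀ U₁ W_k⁻¹ U₁ᵀ (x − x̄_k) + log det(W_k) + c(x), where c(x) = γ⁻¹ ‖U₂ᵀ(x − x̄₁)‖² + (p − q) log γ does not depend on k. Hence argmin over k of the full score equals argmin over k of (x − x̄_k)ᵀ U₁ W_k⁻¹ U₁ᵀ (x − x̄_k) + log det(W_k). -/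
open Matrix

lemma quad_conj {m n : Type*} [Fintype m] [Fintype n]
    (A : Matrix m n ℝ) (B : Matrix n n ℝ) (v : m → ℝ) :
    v ⬝ᵥ (A * B * Aᵀ).mulVec v = Aᵀ.mulVec v ⬝ᵥ B.mulVec (Aᵀ.mulVec v) := by
  rw [← Matrix.mulVec_mulVec, ← Matrix.mulVec_mulVec, Matrix.dotProduct_mulVec,
    ← Matrix.mulVec_transpose]

lemma quad_blocks {m n : Type*} [Fintype m] [Fintype n] [DecidableEq m] [DecidableEq n]
    (B₁ : Matrix m m ℝ) (B₂ : Matrix n n ℝ) (y : (m ⊕ n) → ℝ) :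
    y ⬝ᵥ (Matrix.fromBlocks B₁ 0 0 B₂).mulVec y =
      (y ∘ Sum.inl) ⬝ᵥ B₁.mulVec (y ∘ Sum.inl) + (y ∘ Sum.inr) ⬝ᵥ B₂.mulVec (y ∘ Sum.inr) := by
  have hy : y = Sum.elim (y ∘ Sum.inl) (y ∘ Sum.inr) := (Sum.elim_comp_inl_inr y).symm
  conv_lhs => rw [hy]
  rw [Matrix.fromBlocks_mulVec]
  simp only [Matrix.zero_mulVec, add_zero, zero_add]
  rw [sumElim_dotProduct_sumElim]
  simp [Sum.elim_comp_inl, Sum.elim_comp_inr]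

lemma det_conj {α : Type*} [Fintype α] [DecidableEq α] {p : ℕ}
    (e : α ≃ Fin p) (U : Matrix (Fin p) α ℝ) (hUl : U * Uᵀ = 1)
    (B : Matrix α α ℝ) : (U * B * Uᵀ).det = B.det := by
  have h1 : (U.submatrix id ⇑e.symm) * (B.submatrix ⇑e.symm ⇑e.symm) *
      (Uᵀ.submatrix ⇑e.symm id) = U * B * Uᵀ := by
    rw [Matrix.submatrix_mul_equiv, Matrix.submatrix_mul_equiv, Matrix.submatrix_id_id]
  have h2 : (U.submatrix id ⇑e.symm) * (Uᵀ.submatrix ⇑e.symm id) = 1 := by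
    rw [Matrix.submatrix_mul_equiv, Matrix.submatrix_id_id, hUl]
  have h3 : (U.submatrix id ⇑e.symm).det * (Uᵀ.submatrix ⇑e.symm id).det = 1 := by
    rw [← Matrix.det_mul, h2, Matrix.det_one]
  calc (U * B * Uᵀ).det
      = (U.submatrix id ⇑e.symm).det * (B.submatrix ⇑e.symm ⇑e.symm).det *
        (Uᵀ.submatrix ⇑e.symm id).det := by rw [← h1, Matrix.det_mul, Matrix.det_mul]
    _ = (B.submatrix ⇑e.symm ⇑e.symm).det *
        ((U.submatrix id ⇑e.symm).det * (Uᵀ.submatrix ⇑e.symm id).det) := by ring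
    _ = B.det := by rw [h3, Matrix.det_submatrix_equiv_self, mul_one]

lemma submatrix_mulVec_left {m n l : Type*} [Fintype n] (A : Matrix m n ℝ) (f : l → m)
    (v : n → ℝ) : (A.submatrix f id).mulVec v = fun i => A.mulVec v (f i) := by
  funext i
  simp [Matrix.mulVec, Matrix.submatrix, dotProduct]

theorem hdrda_score_decomposition
    {p q r K : ℕ} (hqr : q + r = p) (hK : 0 < K)
    (U : Matrix (Fin p) ((Fin q) ⊕ (Fin r)) ℝ)
    (hUl : U * Uᵀ = 1) (hUr : Uᵀ * U = 1)
    (U₁ : Matrix (Fin p) (Fin q) ℝ) (hU₁ : U₁ = U.submatrix id Sum.inl)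
    (U₂ : Matrix (Fin p) (Fin r) ℝ) (hU₂ : U₂ = U.submatrix id Sum.inr)
    (W : Fin K → Matrix (Fin q) (Fin q) ℝ) (hW : ∀ k, (W k).PosDef)
    (γ : ℝ) (hγ : 0 < γ)
    (Stil : Fin K → Matrix (Fin p) (Fin p) ℝ)
    (hStil : ∀ k, Stil k =
      U * Matrix.fromBlocks (W k) 0 0 (γ • (1 : Matrix (Fin r) (Fin r) ℝ)) * Uᵀ)
    (xbar : Fin K → (Fin p → ℝ))
    (hconst : ∀ (v : Fin p → ℝ) (k k' : Fin K),
      U₂ᵀ.mulVec (v - xbar k) = U₂ᵀ.mulVec (v - xbar k'))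
    (full red : (Fin p → ℝ) → Fin K → ℝ)
    (hfull : ∀ x k, full x k =
      (x - xbar k) ⬝ᵥ ((Stil k)⁻¹).mulVec (x - xbar k) + Real.log (Stil k).det)
    (hred : ∀ x k, red x k =
      (x - xbar k) ⬝ᵥ (U₁ * (W k)⁻¹ * U₁ᵀ).mulVec (x - xbar k) + Real.log (W k).det)
    (c : (Fin p → ℝ) → ℝ)
    (hc : ∀ x, c x = γ⁻¹ * (U₂ᵀ.mulVec (x - xbar ⟨0, hK⟩) ⬝ᵥ U₂ᵀ.mulVec (x - xbar ⟨0, hK⟩)) +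
      (r : ℝ) * Real.log γ) :
    (∀ x k, full x k = red x k + c x) ∧
    (∀ (x : Fin p → ℝ) (k : Fin K),
      (∀ k', full x k ≤ full x k') ↔ (∀ k', red x k ≤ red x k')) := by
  have hdetW : ∀ k, 0 < (W k).det := fun k => (hW k).det_pos
  have hWunit : ∀ k, IsUnit (W k).det := fun k => isUnit_iff_ne_zero.mpr (hdetW k).ne'
  have e : (Fin q ⊕ Fin r) ≃ Fin p := finSumFinEquiv.trans (finCongr hqr)
  -- inverse of Stil
  have hinv : ∀ k, (Stil k)⁻¹ =
      U * Matrix.fromBlocks (W k)⁻¹ 0 0 (γ⁻¹ • (1 : Matrix (Fin r) (Fin r) ℝ)) * Uᵀ := by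
    intro k
    apply Matrix.inv_eq_right_inv
    rw [hStil]
    have : U * Matrix.fromBlocks (W k) 0 0 (γ • (1 : Matrix (Fin r) (Fin r) ℝ)) * Uᵀ *
        (U * Matrix.fromBlocks (W k)⁻¹ 0 0 (γ⁻¹ • (1 : Matrix (Fin r) (Fin r) ℝ)) * Uᵀ) =
        U * (Matrix.fromBlocks (W k) 0 0 (γ • (1 : Matrix (Fin r) (Fin r) ℝ)) *
          Matrix.fromBlocks (W k)⁻¹ 0 0 (γ⁻¹ • (1 : Matrix (Fin r) (Fin r) ℝ))) * Uᵀ := by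
      simp only [Matrix.mul_assoc]
      rw [← Matrix.mul_assoc Uᵀ U, hUr, Matrix.one_mul]
    rw [this, Matrix.fromBlocks_multiply]
    simp only [Matrix.mul_zero, Matrix.zero_mul, add_zero, zero_add,
      Matrix.mul_nonsing_inv _ (hWunit k), smul_mul_smul_comm, Matrix.mul_one,
      mul_inv_cancel₀ hγ.ne', one_smul]
    rw [Matrix.fromBlocks_one, Matrix.mul_one, hUl]
  -- determinant of Stil
  have hdet : ∀ k, (Stil k).det = (W k).det * γ ^ r := by
    intro k
    rw [hStil, det_conj e U hUl, Matrix.det_fromBlocks_zero₁₂, Matrix.det_smul,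
      Matrix.det_one, mul_one, Fintype.card_fin]
  have hlogdet : ∀ k, Real.log (Stil k).det = Real.log (W k).det + (r : ℝ) * Real.log γ := by
    intro k
    rw [hdet, Real.log_mul (hdetW k).ne' (pow_ne_zero _ hγ.ne'), Real.log_pow]
  have key : ∀ x k, full x k = red x k + c x := by
    intro x k
    set v : Fin p → ℝ := x - xbar k with hv
    set y : (Fin q ⊕ Fin r) → ℝ := Uᵀ.mulVec v with hy
    have hy1 : y ∘ Sum.inl = U₁ᵀ.mulVec v := by
      rw [hU₁, Matrix.transpose_submatrix, submatrix_mulVec_left]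
      rfl
    have hy2 : y ∘ Sum.inr = U₂ᵀ.mulVec v := by
      rw [hU₂, Matrix.transpose_submatrix, submatrix_mulVec_left]
      rfl
    have hquad : v ⬝ᵥ ((Stil k)⁻¹).mulVec v =
        (U₁ᵀ.mulVec v) ⬝ᵥ ((W k)⁻¹).mulVec (U₁ᵀ.mulVec v) +
        γ⁻¹ * ((U₂ᵀ.mulVec v) ⬝ᵥ (U₂ᵀ.mulVec v)) := by
      rw [hinv k, quad_conj, ← hy, quad_blocks, hy1, hy2]
      congr 1
      simp [Matrix.smul_mulVec, Matrix.one_mulVec, dotProduct_smul, smul_eq_mul]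
    have hred' : v ⬝ᵥ (U₁ * (W k)⁻¹ * U₁ᵀ).mulVec v =
        (U₁ᵀ.mulVec v) ⬝ᵥ ((W k)⁻¹).mulVec (U₁ᵀ.mulVec v) := quad_conj U₁ ((W k)⁻¹) v
    have hc2 : U₂ᵀ.mulVec v = U₂ᵀ.mulVec (x - xbar ⟨0, hK⟩) := hconst x k ⟨0, hK⟩
    rw [hfull, hred, hc, ← hv, hquad, hred', hlogdet, hc2]
    ring
  refine ⟨key, fun x k => ?_⟩
  constructor
  · intro h k'
    have := h k'
    rw [key x k, key x k'] at this
    linarith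
  · intro h k'
    rw [key x k, key x k']
    have := h k'
    linarith
end
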